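/- arXiv:math/0612081 — 3 statements merged into one kernel-verified Lean document; each statement's English description precedes it below -/
import Mathlib

section
/- Let 0 → L → M → N → 0 be a short exact sequence of cofinitely generated Z_p-modules. Then, taking projective limits of the torsion exact sequences, there is an exact sequence of finitely generated Z_p-modules 0 → T_p(L) → T_p(M) → T_p(N) → Cotor(L) → Cotor(M) → Cotor(N) → 0, where T_p(A) = lim← A[p^r] is the p-adic Tate module. -/
/-!
Write `E = ℚ_p/ℤ_p`. Being divisible over the principal ideal domain `ℤ_p`, `E` is injective, so
the finitely many generators of `Hom(A, E)` separate the `p`-power torsion of `A`. As `E[p^r]` is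
finite and `T_p(E)` is a quotient of `ℤ_p`, every `A[p^r]` is finite and `T_p(A)` is finitely
generated. The `p^e`-torsion of the noetherian module `Hom(A, E)` stabilises, which makes `p^e A`
divisible for large `e`; hence `A_Div = p^e A` and `Cotor(A) = A/p^e A` is finite.

The six-term sequence is the limit of the snake sequences for multiplication by `p^r`: the
connecting map sends `t` to the class of `f⁻¹(p^e m)` for any lift `m` of `t_e`, and since all
torsion levels are finite, compatible lifts at every level exist by König's lemma
(`nonempty_sections_of_finite_inverse_system`).
-/

abbrev QpModZp (p : ℕ) [Fact p.Prime] :=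
  ℚ_[p] ⧸ LinearMap.range (Algebra.linearMap ℤ_[p] ℚ_[p])

def CofinGen (p : ℕ) [Fact p.Prime] (A : Type*) [AddCommGroup A] [Module ℤ_[p] A] : Prop :=
  Module.Finite ℤ_[p] (A →ₗ[ℤ_[p]] QpModZp p)

def IsDivisibleSubmodule (p : ℕ) [Fact p.Prime] {A : Type*} [AddCommGroup A] [Module ℤ_[p] A]
    (D : Submodule ℤ_[p] A) : Prop :=
  ∀ x ∈ D, ∃ y ∈ D, (p : ℤ_[p]) • y = x

noncomputable def divPart (p : ℕ) [Fact p.Prime] (A : Type*) [AddCommGroup A] [Module ℤ_[p] A] :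
    Submodule ℤ_[p] A :=
  sSup {D | IsDivisibleSubmodule p D}

abbrev Cotor (p : ℕ) [Fact p.Prime] (A : Type*) [AddCommGroup A] [Module ℤ_[p] A] :=
  A ⧸ divPart p A

/-- The `p`-adic Tate module `T_p(A) = lim← A[p^r]`, realized as the module of compatible
sequences `(a_r)_r` with `p^r • a_r = 0` and `p • a_{r+1} = a_r`. -/
def TateModule (p : ℕ) [Fact p.Prime] (A : Type*) [AddCommGroup A] [Module ℤ_[p] A] :
    Submodule ℤ_[p] (ℕ → A) where
  carrier := {a | ∀ r, (p : ℤ_[p]) ^ r • a r = 0 ∧ (p : ℤ_[p]) • a (r + 1) = a r}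
  add_mem' := by
    intro a b ha hb r
    refine ⟨?_, ?_⟩
    · show (p : ℤ_[p]) ^ r • (a r + b r) = 0
      rw [smul_add, (ha r).1, (hb r).1, add_zero]
    · show (p : ℤ_[p]) • (a (r + 1) + b (r + 1)) = a r + b r
      rw [smul_add, (ha r).2, (hb r).2]
  zero_mem' := by intro r; simp
  smul_mem' := by
    intro c a ha r
    refine ⟨?_, ?_⟩
    · show (p : ℤ_[p]) ^ r • c • a r = 0
      rw [smul_smul, mul_comm, ← smul_smul, (ha r).1, smul_zero]
    · show (p : ℤ_[p]) • c • a (r + 1) = c • a r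
      rw [smul_smul, mul_comm, ← smul_smul, (ha r).2]

theorem Module.Baer.of_forall_exists_smul_eq {R Q : Type*} [CommRing R] [IsPrincipalIdealRing R]
    [AddCommGroup Q] [Module R Q] (h : ∀ a : R, a ≠ 0 → ∀ y : Q, ∃ x, a • x = y) :
    Module.Baer R Q := by
  intro I g
  obtain ⟨a, rfl⟩ := (IsPrincipalIdealRing.principal I).principal
  by_cases ha : a = 0
  · subst ha
    refine ⟨0, fun x hx => ?_⟩
    obtain rfl : x = 0 := by simpa using hx
    exact (map_zero g).symm
  · obtain ⟨y, hy⟩ := h a ha (g ⟨a, Submodule.mem_span_singleton_self a⟩)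
    refine ⟨LinearMap.toSpanSingleton R Q y, fun x hx => ?_⟩
    obtain ⟨c, rfl⟩ := Submodule.mem_span_singleton.mp hx
    have : (⟨c • a, hx⟩ : Submodule.span R {a}) = c • ⟨a, Submodule.mem_span_singleton_self a⟩ :=
      rfl
    rw [this, map_smul g, ← hy, LinearMap.toSpanSingleton_apply, smul_smul, smul_eq_mul]

theorem PadicInt.norm_le_inv_pow_iff_dvd {p : ℕ} [Fact p.Prime] (x : ℤ_[p]) (r : ℕ) :
    ‖x‖ ≤ ((p : ℝ)⁻¹) ^ r ↔ (p : ℤ_[p]) ^ r ∣ x := by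
  rw [inv_pow, ← zpow_natCast, ← zpow_neg, PadicInt.norm_le_pow_iff_mem_span_pow,
    Ideal.mem_span_singleton]

theorem PadicInt.exists_forall_pow_dvd_sub {p : ℕ} [Fact p.Prime] (z : ℕ → ℤ_[p])
    (hz : ∀ r, (p : ℤ_[p]) ^ r ∣ z (r + 1) - z r) : ∃ a, ∀ r, (p : ℤ_[p]) ^ r ∣ a - z r := by
  have hdvd (r s : ℕ) : (p : ℤ_[p]) ^ r ∣ z (r + s) - z r := by
    induction s with
    | zero => simp
    | succ s ih =>
      rw [← add_assoc, ← sub_add_sub_cancel _ (z (r + s))]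
      exact dvd_add ((pow_dvd_pow _ (Nat.le_add_right r s)).trans (hz _)) ih
  have hdist (r n : ℕ) (hrn : r ≤ n) : dist (z n) (z r) ≤ ((p : ℝ)⁻¹) ^ r := by
    obtain ⟨s, rfl⟩ := Nat.exists_eq_add_of_le hrn
    rw [dist_eq_norm, PadicInt.norm_le_inv_pow_iff_dvd]
    exact hdvd r s
  have hp : (p : ℝ)⁻¹ < 1 := inv_lt_one_of_one_lt₀ (mod_cast (Fact.out : p.Prime).one_lt)
  obtain ⟨a, ha⟩ := cauchySeq_tendsto_of_complete <| cauchySeq_of_le_tendsto_0' _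
    (fun r n hrn => (dist_comm _ _).trans_le (hdist r n hrn))
    (tendsto_pow_atTop_nhds_zero_of_lt_one (by positivity) hp)
  refine ⟨a, fun r => ?_⟩
  rw [← PadicInt.norm_le_inv_pow_iff_dvd, ← dist_eq_norm]
  exact Metric.isClosed_closedBall.mem_of_tendsto ha
    ((Filter.eventually_ge_atTop r).mono (hdist r))

namespace QpModZp

noncomputable def mk (p : ℕ) [Fact p.Prime] : ℚ_[p] →ₗ[ℤ_[p]] QpModZp p :=
  Submodule.mkQ _

variable {p : ℕ} [Fact p.Prime]

theorem mk_surjective : Function.Surjective (mk p) :=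
  Submodule.mkQ_surjective _

theorem mk_eq_zero_iff {q : ℚ_[p]} : mk p q = 0 ↔ ∃ z : ℤ_[p], (z : ℚ_[p]) = q := by
  simp [mk, LinearMap.mem_range]

theorem smul_mk (c : ℤ_[p]) (q : ℚ_[p]) : c • mk p q = mk p (c * q) := by
  rw [← map_smul, Algebra.smul_def, PadicInt.algebraMap_apply]

theorem mk_div_pow_eq_zero_iff {z : ℤ_[p]} {r : ℕ} :
    mk p (z / (p : ℚ_[p]) ^ r) = 0 ↔ (p : ℤ_[p]) ^ r ∣ z := by
  have hp : (p : ℚ_[p]) ^ r ≠ 0 := pow_ne_zero _ (NeZero.ne _)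
  rw [mk_eq_zero_iff]
  constructor
  · rintro ⟨w, hw⟩
    refine ⟨w, PadicInt.ext ?_⟩
    push_cast
    rw [hw]
    field_simp
  · rintro ⟨w, rfl⟩
    exact ⟨w, by push_cast; field_simp⟩

theorem mk_div_pow_eq_iff {z z' : ℤ_[p]} {r : ℕ} :
    mk p (z / (p : ℚ_[p]) ^ r) = mk p (z' / (p : ℚ_[p]) ^ r) ↔ (p : ℤ_[p]) ^ r ∣ z - z' := by
  rw [← sub_eq_zero, ← map_sub, ← sub_div, ← PadicInt.coe_sub, mk_div_pow_eq_zero_iff]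

theorem pow_smul_mk_div_pow (z : ℤ_[p]) (r : ℕ) :
    (p : ℤ_[p]) ^ r • mk p (z / (p : ℚ_[p]) ^ r) = 0 := by
  have hp : (p : ℚ_[p]) ^ r ≠ 0 := pow_ne_zero _ (NeZero.ne _)
  rw [smul_mk, mk_eq_zero_iff]
  exact ⟨z, by push_cast; field_simp⟩

theorem smul_mk_div_pow_succ (z : ℤ_[p]) (r : ℕ) :
    (p : ℤ_[p]) • mk p (z / (p : ℚ_[p]) ^ (r + 1)) = mk p (z / (p : ℚ_[p]) ^ r) := by
  have hp : (p : ℚ_[p]) ≠ 0 := NeZero.ne _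
  rw [smul_mk]
  congr 1
  push_cast
  field_simp
  ring

theorem exists_mk_div_pow_eq {x : QpModZp p} {r : ℕ} (hx : (p : ℤ_[p]) ^ r • x = 0) :
    ∃ z : ℤ_[p], mk p (z / (p : ℚ_[p]) ^ r) = x := by
  have hp : (p : ℚ_[p]) ^ r ≠ 0 := pow_ne_zero _ (NeZero.ne _)
  obtain ⟨q, rfl⟩ := mk_surjective x
  obtain ⟨z, hz⟩ := mk_eq_zero_iff.mp ((smul_mk _ q).symm.trans hx)
  refine ⟨z, congrArg (mk p) ?_⟩
  rw [hz]
  push_cast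
  field_simp

theorem finite_torsion (r : ℕ) : {x : QpModZp p | (p : ℤ_[p]) ^ r • x = 0}.Finite := by
  refine ((Set.finite_Iio (p ^ r)).image
    fun n : ℕ => mk p ((n : ℤ_[p]) / (p : ℚ_[p]) ^ r)).subset fun x hx => ?_
  obtain ⟨z, rfl⟩ := exists_mk_div_pow_eq hx
  refine ⟨z.appr r, PadicInt.appr_lt z r, mk_div_pow_eq_iff.mpr ?_⟩
  exact dvd_sub_comm.mp (Ideal.mem_span_singleton.mp (PadicInt.appr_spec r z))

theorem baer : Module.Baer ℤ_[p] (QpModZp p) := by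
  refine Module.Baer.of_forall_exists_smul_eq fun a ha y => ?_
  obtain ⟨q, rfl⟩ := mk_surjective y
  have ha' : (a : ℚ_[p]) ≠ 0 := PadicInt.coe_ne_zero.mpr ha
  exact ⟨mk p (q / a), by rw [smul_mk, mul_div_cancel₀ _ ha']⟩

noncomputable def toTateModule (p : ℕ) [Fact p.Prime] :
    ℤ_[p] →ₗ[ℤ_[p]] TateModule p (QpModZp p) :=
  LinearMap.toSpanSingleton ℤ_[p] _
    ⟨fun r => mk p ((1 : ℤ_[p]) / (p : ℚ_[p]) ^ r),
      fun r => ⟨pow_smul_mk_div_pow 1 r, smul_mk_div_pow_succ 1 r⟩⟩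

theorem toTateModule_apply (z : ℤ_[p]) (r : ℕ) :
    (toTateModule p z : ℕ → QpModZp p) r = mk p (z / (p : ℚ_[p]) ^ r) := by
  simp [toTateModule, smul_mk, div_eq_mul_inv]

theorem toTateModule_surjective : Function.Surjective (toTateModule p) := by
  intro t
  choose z hz using fun r => exists_mk_div_pow_eq ((t.2 r).1)
  obtain ⟨a, ha⟩ := PadicInt.exists_forall_pow_dvd_sub z fun r => by
    rw [← mk_div_pow_eq_iff, ← smul_mk_div_pow_succ, hz, hz]
    exact (t.2 r).2
  refine ⟨a, Subtype.ext <| funext fun r => ?_⟩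
  rw [toTateModule_apply, mk_div_pow_eq_iff.mpr (ha r), hz]

end QpModZp

section Modules

variable {p : ℕ} [Fact p.Prime] {A B : Type*} [AddCommGroup A] [Module ℤ_[p] A]
  [AddCommGroup B] [Module ℤ_[p] B]

theorem exists_linearMap_qpModZp_ne_zero {x : A} (hx : x ≠ 0) {r : ℕ}
    (hr : (p : ℤ_[p]) ^ r • x = 0) : ∃ φ : A →ₗ[ℤ_[p]] QpModZp p, φ x ≠ 0 := by
  set ρ := LinearMap.toSpanSingleton ℤ_[p] A x
  have hρ : LinearMap.ker ρ ≠ ⊥ := by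
    intro h
    have hpr : (p : ℤ_[p]) ^ r ∈ LinearMap.ker ρ := hr
    rw [h, Submodule.mem_bot] at hpr
    exact pow_ne_zero r (NeZero.ne _) hpr
  obtain ⟨k, hk⟩ := PadicInt.ideal_eq_span_pow_p hρ
  have hk0 : k ≠ 0 := by
    rintro rfl
    have : (1 : ℤ_[p]) ∈ LinearMap.ker ρ := by simp [hk]
    exact hx (by simpa [ρ] using this)
  set ψ := LinearMap.toSpanSingleton ℤ_[p] (QpModZp p) (QpModZp.mk p (1 / (p : ℚ_[p]) ^ k))
  have hψ (c : ℤ_[p]) : ψ c = QpModZp.mk p (c / (p : ℚ_[p]) ^ k) := by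
    rw [LinearMap.toSpanSingleton_apply, QpModZp.smul_mk, mul_one_div]
  have hle : LinearMap.ker ρ ≤ LinearMap.ker ψ := fun c hc => by
    rw [hk, Ideal.mem_span_singleton] at hc
    rwa [LinearMap.mem_ker, hψ, QpModZp.mk_div_pow_eq_zero_iff]
  have hψ1 : ψ 1 ≠ 0 := by
    rw [hψ, Ne, QpModZp.mk_div_pow_eq_zero_iff, ← isUnit_iff_dvd_one, isUnit_pow_iff hk0]
    exact PadicInt.p_nonunit
  obtain ⟨φ, hφ⟩ := QpModZp.baer.extension_property ((LinearMap.ker ρ).liftQ ρ le_rfl)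
    (LinearMap.ker_eq_bot.mp (Submodule.ker_liftQ_eq_bot _ _ _ le_rfl))
    ((LinearMap.ker ρ).liftQ ψ hle)
  refine ⟨φ, ?_⟩
  have := LinearMap.congr_fun hφ (Submodule.Quotient.mk 1)
  simp only [LinearMap.comp_apply, Submodule.liftQ_apply, ρ, LinearMap.toSpanSingleton_apply,
    one_smul] at this
  rwa [this]

theorem exists_pow_succ_smul_eq_pow_smul {e : ℕ}
    (h : ∀ φ : A →ₗ[ℤ_[p]] QpModZp p, (p : ℤ_[p]) ^ (e + 1) • φ = 0 → (p : ℤ_[p]) ^ e • φ = 0)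
    (x : A) : ∃ y : A, (p : ℤ_[p]) ^ (e + 1) • y = (p : ℤ_[p]) ^ e • x := by
  -- a functional on `A / p ^ (e + 1) A` not vanishing at `p ^ e • x` would be killed by
  -- `p ^ (e + 1)` but not by `p ^ e`
  by_contra! hx
  set P := LinearMap.range ((p : ℤ_[p]) ^ (e + 1) • LinearMap.id : A →ₗ[ℤ_[p]] A)
  have hP (y : A) : (p : ℤ_[p]) ^ (e + 1) • y ∈ P := ⟨y, rfl⟩
  have hx' : P.mkQ ((p : ℤ_[p]) ^ e • x) ≠ 0 := by
    rw [Submodule.mkQ_apply, Ne, Submodule.Quotient.mk_eq_zero]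
    rintro ⟨y, hy⟩
    exact hx y hy
  have htors : (p : ℤ_[p]) ^ 1 • P.mkQ ((p : ℤ_[p]) ^ e • x) = 0 := by
    rw [← map_smul, smul_smul, ← pow_add, add_comm, Submodule.mkQ_apply,
      Submodule.Quotient.mk_eq_zero]
    exact hP x
  obtain ⟨φ, hφ⟩ := exists_linearMap_qpModZp_ne_zero hx' htors
  have hφ0 : (p : ℤ_[p]) ^ (e + 1) • φ.comp P.mkQ = 0 := LinearMap.ext fun y => by
    rw [LinearMap.smul_apply, LinearMap.comp_apply, ← map_smul, ← map_smul, Submodule.mkQ_apply,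
      (Submodule.Quotient.mk_eq_zero P).mpr (hP y), map_zero, LinearMap.zero_apply]
  apply hφ
  simpa using LinearMap.congr_fun (h _ hφ0) x

theorem isDivisibleSubmodule_divPart : IsDivisibleSubmodule p (divPart p A) := by
  intro x hx
  rw [divPart, sSup_eq_iSup'] at hx
  refine Submodule.iSup_induction _ (motive := fun x => ∃ y ∈ divPart p A, (p : ℤ_[p]) • y = x)
    hx (fun D x hx => ?_) ⟨0, zero_mem _, smul_zero _⟩ ?_
  · obtain ⟨y, hy, rfl⟩ := D.2 x hx
    exact ⟨y, le_sSup D.2 hy, rfl⟩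
  · rintro _ _ ⟨y, hy, rfl⟩ ⟨y', hy', rfl⟩
    exact ⟨y + y', add_mem hy hy', smul_add _ _ _⟩

theorem exists_pow_smul_eq_of_mem_divPart {x : A} (hx : x ∈ divPart p A) (k : ℕ) :
    ∃ y, (p : ℤ_[p]) ^ k • y = x := by
  induction k generalizing x with
  | zero => exact ⟨x, one_smul _ _⟩
  | succ k ih =>
    obtain ⟨y, hy, rfl⟩ := isDivisibleSubmodule_divPart x hx
    obtain ⟨z, rfl⟩ := ih hy
    exact ⟨z, by rw [pow_succ', mul_smul]⟩

theorem map_divPart_le (f : A →ₗ[ℤ_[p]] B) : (divPart p A).map f ≤ divPart p B := by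
  refine le_sSup fun x hx => ?_
  obtain ⟨a, ha, rfl⟩ := hx
  obtain ⟨b, hb, rfl⟩ := isDivisibleSubmodule_divPart a ha
  exact ⟨f b, Submodule.mem_map_of_mem hb, (map_smul f _ b).symm⟩

noncomputable def Cotor.map (f : A →ₗ[ℤ_[p]] B) : Cotor p A →ₗ[ℤ_[p]] Cotor p B :=
  Submodule.mapQ _ _ f (Submodule.map_le_iff_le_comap.mp (map_divPart_le f))

@[simp]
theorem Cotor.map_mk (f : A →ₗ[ℤ_[p]] B) (x : A) :
    Cotor.map f (Submodule.Quotient.mk x) = Submodule.Quotient.mk (f x) :=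
  rfl

theorem TateModule.pow_smul_apply_add {a : ℕ → A} (ha : a ∈ TateModule p A) (r s : ℕ) :
    (p : ℤ_[p]) ^ s • a (r + s) = a r := by
  induction s with
  | zero => rw [pow_zero, one_smul, add_zero]
  | succ s ih => rw [← add_assoc, pow_succ, mul_smul, (ha (r + s)).2, ih]

noncomputable def TateModule.map (f : A →ₗ[ℤ_[p]] B) :
    TateModule p A →ₗ[ℤ_[p]] TateModule p B :=
  (f.compLeft ℕ).restrict fun a ha r =>
    ⟨by simp [← map_smul, (ha r).1], by simp [← map_smul, (ha r).2]⟩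

end Modules

namespace CofinGen

variable {p : ℕ} [Fact p.Prime] {A : Type*} [AddCommGroup A] [Module ℤ_[p] A]

theorem exists_separating (hA : CofinGen p A) :
    ∃ (n : ℕ) (S : Fin n → A →ₗ[ℤ_[p]] QpModZp p), ∀ (x : A) (r : ℕ),
      (p : ℤ_[p]) ^ r • x = 0 → (∀ i, S i x = 0) → x = 0 := by
  have : Module.Finite ℤ_[p] (A →ₗ[ℤ_[p]] QpModZp p) := hA
  obtain ⟨n, S, hS⟩ := Module.Finite.exists_fin (R := ℤ_[p]) (M := A →ₗ[ℤ_[p]] QpModZp p)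
  refine ⟨n, S, fun x r hr h0 => by_contra fun hx => ?_⟩
  obtain ⟨φ, hφ⟩ := exists_linearMap_qpModZp_ne_zero hx hr
  have hker : Submodule.span ℤ_[p] (Set.range S) ≤ LinearMap.ker (LinearMap.applyₗ x) :=
    Submodule.span_le.mpr (Set.range_subset_iff.mpr h0)
  exact hφ (hker (hS ▸ Submodule.mem_top : φ ∈ _))

theorem finite_torsion (hA : CofinGen p A) (r : ℕ) :
    {x : A | (p : ℤ_[p]) ^ r • x = 0}.Finite := by
  obtain ⟨n, S, hS⟩ := hA.exists_separating
  refine Set.Finite.of_finite_image (f := fun x i => S i x)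
    ((Set.Finite.pi fun _ => QpModZp.finite_torsion r).subset ?_) fun x hx y hy hxy => ?_
  · rintro _ ⟨x, hx, rfl⟩ i -
    exact (map_smul (S i) _ x).symm.trans (by rw [show (p : ℤ_[p]) ^ r • x = 0 from hx, map_zero])
  · refine sub_eq_zero.mp (hS _ r ?_ fun i => ?_)
    · rw [smul_sub, show (p : ℤ_[p]) ^ r • x = 0 from hx, show (p : ℤ_[p]) ^ r • y = 0 from hy,
        sub_zero]
    · rw [map_sub, sub_eq_zero]
      exact congrFun hxy i

theorem quotient (hA : CofinGen p A) (D : Submodule ℤ_[p] A) : CofinGen p (A ⧸ D) := by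
  have : Module.Finite ℤ_[p] (A →ₗ[ℤ_[p]] QpModZp p) := hA
  exact Module.Finite.of_injective (LinearMap.lcomp ℤ_[p] (QpModZp p) D.mkQ)
    fun _ _ h => Submodule.linearMap_qext D h

theorem exists_forall_pow_smul_mem_divPart (hA : CofinGen p A) :
    ∃ e₀, ∀ e, e₀ ≤ e → ∀ x : A, (p : ℤ_[p]) ^ e • x ∈ divPart p A := by
  have : Module.Finite ℤ_[p] (A →ₗ[ℤ_[p]] QpModZp p) := hA
  let T : ℕ →o Submodule ℤ_[p] (A →ₗ[ℤ_[p]] QpModZp p) :=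
    ⟨fun e => Submodule.torsionBy ℤ_[p] _ ((p : ℤ_[p]) ^ e),
      fun _ _ h => Submodule.torsionBy_le_torsionBy_of_dvd _ _ (pow_dvd_pow _ h)⟩
  obtain ⟨e₀, he₀⟩ := monotone_stabilizes_iff_noetherian.mpr inferInstance T
  have hstep := exists_pow_succ_smul_eq_pow_smul (e := e₀) fun φ (hφ : φ ∈ T (e₀ + 1)) =>
    show φ ∈ T e₀ from (he₀ (e₀ + 1) e₀.le_succ).symm ▸ hφ
  let D := LinearMap.range ((p : ℤ_[p]) ^ e₀ • LinearMap.id : A →ₗ[ℤ_[p]] A)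
  have hD : IsDivisibleSubmodule p D := by
    rintro _ ⟨x, rfl⟩
    obtain ⟨y, hy⟩ := hstep x
    exact ⟨(p : ℤ_[p]) ^ e₀ • y, ⟨y, rfl⟩, by simpa [smul_smul, ← pow_succ'] using hy⟩
  have hDle : D ≤ divPart p A := le_sSup hD
  refine ⟨e₀, fun e he x => hDle ⟨(p : ℤ_[p]) ^ (e - e₀) • x, ?_⟩⟩
  simp [smul_smul, ← pow_add, Nat.sub_add_cancel he]

theorem finite_cotor (hA : CofinGen p A) : Module.Finite ℤ_[p] (Cotor p A) := by
  obtain ⟨e, he⟩ := hA.exists_forall_pow_smul_mem_divPart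
  have : Finite (Cotor p A) := by
    refine Set.finite_univ_iff.mp (((hA.quotient _).finite_torsion e).subset fun y _ => ?_)
    obtain ⟨x, rfl⟩ := Submodule.mkQ_surjective _ y
    exact (Submodule.Quotient.mk_eq_zero _).mpr (he e le_rfl x)
  infer_instance

theorem finite_tateModule (hA : CofinGen p A) : Module.Finite ℤ_[p] (TateModule p A) := by
  obtain ⟨n, S, hS⟩ := hA.exists_separating
  have : Module.Finite ℤ_[p] (TateModule p (QpModZp p)) :=
    Module.Finite.of_surjective _ QpModZp.toTateModule_surjective
  refine Module.Finite.of_injective (LinearMap.pi fun i => TateModule.map (S i)) fun a b hab => ?_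
  refine Subtype.ext <| funext fun r => sub_eq_zero.mp (hS _ r ?_ fun i => ?_)
  · rw [smul_sub, (a.2 r).1, (b.2 r).1, sub_zero]
  · rw [map_sub, sub_eq_zero]
    exact congrArg (fun t : TateModule p (QpModZp p) => (t : ℕ → QpModZp p) r) (congrFun hab i)

end CofinGen

open CategoryTheory in
theorem exists_compatible_seq_of_finite_nonempty {X : Type*} (F : X → X) (S : ℕ → Set X)
    (hfin : ∀ r, (S r).Finite) (hne : ∀ r, (S r).Nonempty)
    (hmaps : ∀ r, Set.MapsTo F (S (r + 1)) (S r)) :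
    ∃ s : ℕ → X, (∀ r, s r ∈ S r) ∧ ∀ r, F (s (r + 1)) = s r := by
  let G : ℕᵒᵖ ⥤ Type _ := Functor.ofOpSequence (X := fun r => S r)
    fun r => TypeCat.ofHom fun x => ⟨F x, hmaps r x.2⟩
  have (r : ℕᵒᵖ) : Finite (G.obj r) := (hfin r.unop).to_subtype
  have (r : ℕᵒᵖ) : Nonempty (G.obj r) := (hne r.unop).to_subtype
  obtain ⟨u, hu⟩ := nonempty_sections_of_finite_inverse_system G
  refine ⟨fun r => (u ⟨r⟩).1, fun r => (u ⟨r⟩).2, fun r => ?_⟩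
  have := hu (homOfLE (Nat.le_add_right r 1)).op
  rw [Functor.ofOpSequence_map_homOfLE_succ] at this
  exact congrArg Subtype.val this

section ShortExact

variable {p : ℕ} [Fact p.Prime] {L M N : Type*} [AddCommGroup L] [Module ℤ_[p] L]
  [AddCommGroup M] [Module ℤ_[p] M] [AddCommGroup N] [Module ℤ_[p] N]
  {f : L →ₗ[ℤ_[p]] M} {g : M →ₗ[ℤ_[p]] N}

theorem TateModule.map_injective (hf : Function.Injective f) :
    Function.Injective (TateModule.map (p := p) f) :=
  fun _ _ hab => Subtype.ext <| funext fun r => hf (congrFun (congrArg Subtype.val hab) r)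

theorem TateModule.exact_map (hf : Function.Injective f) (hfg : Function.Exact f g) :
    Function.Exact (TateModule.map (p := p) f) (TateModule.map g) := by
  intro t
  constructor
  · intro ht
    choose l hl using fun r => (hfg _).mp (congrFun (congrArg Subtype.val ht) r)
    refine ⟨⟨l, fun r => ⟨hf ?_, hf ?_⟩⟩, Subtype.ext (funext hl)⟩
    · rw [map_smul, hl, map_zero]
      exact (t.2 r).1
    · rw [map_smul, hl, hl]
      exact (t.2 r).2
  · rintro ⟨s, rfl⟩
    exact Subtype.ext <| funext fun r => hfg.apply_apply_eq_zero _

theorem Cotor.map_surjective (hg : Function.Surjective g) :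
    Function.Surjective (Cotor.map (p := p) g) := by
  intro x
  obtain ⟨n, rfl⟩ := Submodule.Quotient.mk_surjective _ x
  obtain ⟨m, rfl⟩ := hg n
  exact ⟨Submodule.Quotient.mk m, rfl⟩

theorem Cotor.exact_map (hfg : Function.Exact f g) (hg : Function.Surjective g) {e : ℕ}
    (hMe : ∀ x : M, (p : ℤ_[p]) ^ e • x ∈ divPart p M) :
    Function.Exact (Cotor.map (p := p) f) (Cotor.map g) := by
  intro x
  constructor
  · intro hx
    obtain ⟨m, rfl⟩ := Submodule.Quotient.mk_surjective _ x
    obtain ⟨n, hn⟩ := exists_pow_smul_eq_of_mem_divPart ((Submodule.Quotient.mk_eq_zero _).mp hx) e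
    obtain ⟨m', rfl⟩ := hg n
    obtain ⟨l, hl⟩ := (hfg (m - (p : ℤ_[p]) ^ e • m')).mp (by rw [map_sub, map_smul, hn, sub_self])
    refine ⟨Submodule.Quotient.mk l, ?_⟩
    rw [Cotor.map_mk, hl, Submodule.Quotient.eq, sub_sub_cancel_left, neg_mem_iff]
    exact hMe m'
  · rintro ⟨y, rfl⟩
    obtain ⟨l, rfl⟩ := Submodule.Quotient.mk_surjective _ y
    rw [Cotor.map_mk, Cotor.map_mk, hfg.apply_apply_eq_zero]
    rfl

theorem exists_lift_pow_smul (hfg : Function.Exact f g) (hg : Function.Surjective g)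
    (t : TateModule p N) (r : ℕ) :
    ∃ (m : M) (l : L), g m = (t : ℕ → N) r ∧ f l = (p : ℤ_[p]) ^ r • m := by
  obtain ⟨m, hm⟩ := hg ((t : ℕ → N) r)
  obtain ⟨l, hl⟩ := (hfg _).mp (show g ((p : ℤ_[p]) ^ r • m) = 0 by rw [map_smul, hm, (t.2 r).1])
  exact ⟨m, l, hm, hl⟩

theorem Cotor.mk_eq_mk_of_lift (hf : Function.Injective f) (hfg : Function.Exact f g) {e : ℕ}
    (hLe : ∀ x : L, (p : ℤ_[p]) ^ e • x ∈ divPart p L) {m m' : M} {l l' : L}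
    (hm : g m = g m') (hl : f l = (p : ℤ_[p]) ^ e • m) (hl' : f l' = (p : ℤ_[p]) ^ e • m') :
    (Submodule.Quotient.mk l : Cotor p L) = Submodule.Quotient.mk l' := by
  obtain ⟨u, hu⟩ := (hfg (m - m')).mp (by rw [map_sub, hm, sub_self])
  have : l - l' = (p : ℤ_[p]) ^ e • u := hf (by rw [map_sub, hl, hl', map_smul, hu, smul_sub])
  rw [Submodule.Quotient.eq, this]
  exact hLe u

theorem exists_connectingMap (hf : Function.Injective f) (hfg : Function.Exact f g)
    (hg : Function.Surjective g) {e : ℕ} (hLe : ∀ x : L, (p : ℤ_[p]) ^ e • x ∈ divPart p L) :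
    ∃ δ : TateModule p N →ₗ[ℤ_[p]] Cotor p L, ∀ (t : TateModule p N) (m : M) (l : L),
      g m = (t : ℕ → N) e → f l = (p : ℤ_[p]) ^ e • m → δ t = Submodule.Quotient.mk l := by
  choose m l hm hl using fun t => exists_lift_pow_smul hfg hg t e
  have hδ (t : TateModule p N) (m' : M) (l' : L) (hm' : g m' = (t : ℕ → N) e)
      (hl' : f l' = (p : ℤ_[p]) ^ e • m') :
      (Submodule.Quotient.mk (l t) : Cotor p L) = Submodule.Quotient.mk l' :=
    Cotor.mk_eq_mk_of_lift hf hfg hLe ((hm t).trans hm'.symm) (hl t) hl'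
  refine ⟨
    { toFun := fun t => Submodule.Quotient.mk (l t)
      map_add' := fun t t' => (hδ (t + t') (m t + m t') (l t + l t') (by rw [map_add, hm, hm]; rfl)
        (by rw [map_add, hl, hl, smul_add])).trans (Submodule.Quotient.mk_add _)
      map_smul' := fun c t => (hδ (c • t) (c • m t) (c • l t) (by rw [map_smul, hm]; rfl)
        (by rw [map_smul, hl, smul_comm])).trans (Submodule.Quotient.mk_smul _ _ _) }, hδ⟩

theorem exact_tateModuleMap_connecting (hfg : Function.Exact f g) (hg : Function.Surjective g)
    (hMfin : ∀ r, {x : M | (p : ℤ_[p]) ^ r • x = 0}.Finite)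
    {e : ℕ} {δ : TateModule p N →ₗ[ℤ_[p]] Cotor p L}
    (hδ : ∀ (t : TateModule p N) (m : M) (l : L),
      g m = (t : ℕ → N) e → f l = (p : ℤ_[p]) ^ e • m → δ t = Submodule.Quotient.mk l) :
    Function.Exact (TateModule.map g) δ := by
  intro t
  constructor
  · intro hδt
    have hS (r : ℕ) : ∃ m : M, g m = (t : ℕ → N) r ∧ (p : ℤ_[p]) ^ r • m = 0 := by
      obtain ⟨m, l, hm, hl⟩ := exists_lift_pow_smul hfg hg t (r + e)
      have hl0 : (Submodule.Quotient.mk l : Cotor p L) = 0 := by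
        rw [← hδ t ((p : ℤ_[p]) ^ r • m) l
          (by rw [map_smul, hm, add_comm]; exact TateModule.pow_smul_apply_add t.2 e r)
          (by rw [hl, smul_smul, ← pow_add, add_comm])]
        exact hδt
      obtain ⟨u, rfl⟩ :=
        exists_pow_smul_eq_of_mem_divPart ((Submodule.Quotient.mk_eq_zero _).mp hl0) (r + e)
      refine ⟨(p : ℤ_[p]) ^ e • (m - f u), ?_, ?_⟩
      · rw [map_smul, map_sub, hm, hfg.apply_apply_eq_zero, sub_zero]
        exact TateModule.pow_smul_apply_add t.2 r e
      · rw [smul_smul, ← pow_add, smul_sub, ← hl, ← map_smul, sub_self]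
    obtain ⟨s, hs, hcompat⟩ := exists_compatible_seq_of_finite_nonempty ((p : ℤ_[p]) • ·)
      (fun r => {m | g m = (t : ℕ → N) r ∧ (p : ℤ_[p]) ^ r • m = 0})
      (fun r => (hMfin r).subset fun _ h => h.2) hS fun r m ⟨hm, hm0⟩ => by
        refine ⟨?_, ?_⟩
        · rw [map_smul, hm]
          exact (t.2 r).2
        · rw [smul_smul, ← pow_succ]
          exact hm0
    exact ⟨⟨s, fun r => ⟨(hs r).2, hcompat r⟩⟩, Subtype.ext (funext fun r => (hs r).1)⟩
  · rintro ⟨s, rfl⟩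
    rw [hδ _ ((s : ℕ → M) e) 0 rfl (by rw [map_zero, (s.2 e).1])]
    rfl

theorem exact_connecting_cotorMap (hfg : Function.Exact f g) (hg : Function.Surjective g)
    (hNfin : ∀ r, {x : N | (p : ℤ_[p]) ^ r • x = 0}.Finite)
    {e : ℕ} {δ : TateModule p N →ₗ[ℤ_[p]] Cotor p L}
    (hδ : ∀ (t : TateModule p N) (m : M) (l : L),
      g m = (t : ℕ → N) e → f l = (p : ℤ_[p]) ^ e • m → δ t = Submodule.Quotient.mk l)
    (hMe : ∀ x : M, (p : ℤ_[p]) ^ e • x ∈ divPart p M) :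
    Function.Exact δ (Cotor.map f) := by
  intro x
  constructor
  · intro hx
    obtain ⟨l, rfl⟩ := Submodule.Quotient.mk_surjective _ x
    have hfl : f l ∈ divPart p M := (Submodule.Quotient.mk_eq_zero _).mp hx
    obtain ⟨ν, hν, hcompat⟩ := exists_compatible_seq_of_finite_nonempty ((p : ℤ_[p]) • ·)
      (fun r => g '' {m | (p : ℤ_[p]) ^ r • m = f l})
      (fun r => (hNfin r).subset <| by
        rintro _ ⟨m, hm, rfl⟩
        exact (map_smul g _ m).symm.trans (by rw [show _ = f l from hm, hfg.apply_apply_eq_zero]))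
      (fun r => Set.Nonempty.image g (exists_pow_smul_eq_of_mem_divPart hfl r))
      fun r => by
        rintro _ ⟨m, hm, rfl⟩
        exact ⟨(p : ℤ_[p]) • m, show (p : ℤ_[p]) ^ r • (p : ℤ_[p]) • m = f l by
          rwa [smul_smul, ← pow_succ], map_smul g _ m⟩
    have htors (r : ℕ) : (p : ℤ_[p]) ^ r • ν r = 0 := by
      obtain ⟨m, hm, hgm⟩ := hν r
      rw [← hgm, ← map_smul, show _ = f l from hm, hfg.apply_apply_eq_zero]
    obtain ⟨m, hm, hgm⟩ := hν e
    exact ⟨⟨ν, fun r => ⟨htors r, hcompat r⟩⟩, hδ _ m l hgm hm.symm⟩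
  · rintro ⟨t, rfl⟩
    obtain ⟨m, l, hm, hl⟩ := exists_lift_pow_smul hfg hg t e
    rw [hδ t m l hm hl, Cotor.map_mk, hl, Submodule.Quotient.mk_eq_zero]
    exact hMe m

end ShortExact

/-- Lemma 1.3 (1), second part: for a short exact sequence `0 → L → M → N → 0` of cofinitely
generated `ℤ_p`-modules, taking projective limits of the torsion exact sequences yields an
exact sequence of finitely generated `ℤ_p`-modules
`0 → T_p(L) → T_p(M) → T_p(N) → Cotor L → Cotor M → Cotor N → 0`. -/
theorem stmt1 {p : ℕ} [Fact p.Prime]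
    {L M N : Type*} [AddCommGroup L] [Module ℤ_[p] L] [AddCommGroup M] [Module ℤ_[p] M]
    [AddCommGroup N] [Module ℤ_[p] N]
    (f : L →ₗ[ℤ_[p]] M) (g : M →ₗ[ℤ_[p]] N)
    (hf : Function.Injective f) (hg : Function.Surjective g)
    (hfg : LinearMap.range f = LinearMap.ker g)
    (hL : CofinGen p L) (hM : CofinGen p M) (hN : CofinGen p N) :
    ∃ (Tf : TateModule p L →ₗ[ℤ_[p]] TateModule p M)
      (Tg : TateModule p M →ₗ[ℤ_[p]] TateModule p N)
      (δ : TateModule p N →ₗ[ℤ_[p]] Cotor p L)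
      (fc : Cotor p L →ₗ[ℤ_[p]] Cotor p M)
      (gc : Cotor p M →ₗ[ℤ_[p]] Cotor p N),
      (∀ (a : TateModule p L) (r : ℕ), ((Tf a : ℕ → M) r) = f ((a : ℕ → L) r)) ∧
      (∀ (a : TateModule p M) (r : ℕ), ((Tg a : ℕ → N) r) = g ((a : ℕ → M) r)) ∧
      (∀ x : L, fc (Submodule.Quotient.mk x) = Submodule.Quotient.mk (f x)) ∧
      (∀ x : M, gc (Submodule.Quotient.mk x) = Submodule.Quotient.mk (g x)) ∧
      Function.Injective Tf ∧
      Function.Exact Tf Tg ∧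
      Function.Exact Tg δ ∧
      Function.Exact δ fc ∧
      Function.Exact fc gc ∧
      Function.Surjective gc ∧
      Module.Finite ℤ_[p] (TateModule p L) ∧
      Module.Finite ℤ_[p] (TateModule p M) ∧
      Module.Finite ℤ_[p] (TateModule p N) ∧
      Module.Finite ℤ_[p] (Cotor p L) ∧
      Module.Finite ℤ_[p] (Cotor p M) ∧
      Module.Finite ℤ_[p] (Cotor p N) := by
  have hfg : Function.Exact f g := LinearMap.exact_iff.mpr hfg.symm
  obtain ⟨eL, heL⟩ := hL.exists_forall_pow_smul_mem_divPart
  obtain ⟨eM, heM⟩ := hM.exists_forall_pow_smul_mem_divPart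
  have hLe := heL (max eL eM) (le_max_left _ _)
  have hMe := heM (max eL eM) (le_max_right _ _)
  obtain ⟨δ, hδ⟩ := exists_connectingMap hf hfg hg hLe
  exact ⟨TateModule.map f, TateModule.map g, δ, Cotor.map f, Cotor.map g,
    fun _ _ => rfl, fun _ _ => rfl, fun _ => rfl, fun _ => rfl,
    TateModule.map_injective hf, TateModule.exact_map hf hfg,
    exact_tateModuleMap_connecting hfg hg hM.finite_torsion hδ,
    exact_connecting_cotorMap hfg hg hN.finite_torsion hδ hMe,
    Cotor.exact_map hfg hg hMe, Cotor.map_surjective hg,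
    hL.finite_tateModule, hM.finite_tateModule, hN.finite_tateModule,
    hL.finite_cotor, hM.finite_cotor, hN.finite_cotor⟩
end

section
/- Let 0 → L → M → N → 0 be a short exact sequence of Z_p-modules such that L_Div is cofinitely generated and Cotor(L) has finite exponent. Then for any divisible subgroup D ⊆ N, letting D' ⊆ M be its preimage, the induced map (D')_Div → D is surjective. In particular, the natural map M_Div → N_Div is surjective. -/
/-!
Let `n` kill `Cotor(L)`, so that `n • L ⊆ L_Div`. Given `d ∈ D`, divide it by `n` inside `D` and
then by all powers of `p`, obtaining `e₀, e₁, e₂, …` in `D` with `n • e₀ = d` and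
`p • eᵢ₊₁ = eᵢ`. Lift each `eᵢ` to some `mᵢ ∈ M`: the defects `p • mᵢ₊₁ - mᵢ` lie in `f(L)`, so
those of `yᵢ := n • mᵢ` lie in the divisible module `f(L_Div)`. Hence the span of the `yᵢ`
together with `f(L_Div)` is divisible; it lies over `D`, and `y₀` maps to `d`.
-/

section Divisible

variable {p : ℕ} [Fact p.Prime] {A B : Type*} [AddCommGroup A] [Module ℤ_[p] A]
  [AddCommGroup B] [Module ℤ_[p] B]

theorem isDivisibleSubmodule_iff_le_map_smul {D : Submodule ℤ_[p] A} :
    IsDivisibleSubmodule p D ↔ D ≤ D.map ((p : ℤ_[p]) • LinearMap.id) := by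
  simp only [IsDivisibleSubmodule, SetLike.le_def, Submodule.mem_map, LinearMap.smul_apply,
    LinearMap.id_apply]

theorem IsDivisibleSubmodule.map (φ : A →ₗ[ℤ_[p]] B) {D : Submodule ℤ_[p] A}
    (hD : IsDivisibleSubmodule p D) : IsDivisibleSubmodule p (D.map φ) := by
  rintro _ ⟨x, hx, rfl⟩
  obtain ⟨y, hy, rfl⟩ := hD x hx
  exact ⟨φ y, ⟨y, hy, rfl⟩, (map_smul φ _ y).symm⟩

theorem IsDivisibleSubmodule.exists_pow_smul_eq {D : Submodule ℤ_[p] A}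
    (hD : IsDivisibleSubmodule p D) (k : ℕ) {x : A} (hx : x ∈ D) :
    ∃ y ∈ D, (p : ℤ_[p]) ^ k • y = x := by
  induction k generalizing x with
  | zero => exact ⟨x, hx, one_smul _ x⟩
  | succ k ih =>
    obtain ⟨y, hy, rfl⟩ := hD x hx
    obtain ⟨z, hz, rfl⟩ := ih hy
    exact ⟨z, hz, by rw [pow_succ', mul_smul]⟩

-- Every nonzero `a` is a unit times `p ^ v`.
theorem IsDivisibleSubmodule.exists_smul_eq {D : Submodule ℤ_[p] A}
    (hD : IsDivisibleSubmodule p D) {a : ℤ_[p]} (ha : a ≠ 0) {x : A} (hx : x ∈ D) :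
    ∃ y ∈ D, a • y = x := by
  set u := PadicInt.unitCoeff ha
  obtain ⟨y, hy, hyx⟩ := hD.exists_pow_smul_eq a.valuation (D.smul_mem (↑u⁻¹ : ℤ_[p]) hx)
  refine ⟨y, hy, ?_⟩
  rw [PadicInt.unitCoeff_spec ha, mul_smul, hyx, ← mul_smul, Units.mul_inv, one_smul]

theorem IsDivisibleSubmodule.exists_seq {D : Submodule ℤ_[p] A}
    (hD : IsDivisibleSubmodule p D) {x : A} (hx : x ∈ D) :
    ∃ e : ℕ → A, e 0 = x ∧ (∀ i, e i ∈ D) ∧ ∀ i, (p : ℤ_[p]) • e (i + 1) = e i := by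
  choose root root_mem smul_root using hD
  let e : ℕ → D := fun i => Nat.rec (motive := fun _ => D) ⟨x, hx⟩ (fun _ y => ⟨root y y.2, root_mem y y.2⟩) i
  exact ⟨fun i => (e i : A), rfl, fun i => (e i).2, fun i => smul_root (e i) (e i).2⟩

theorem isDivisibleSubmodule_span_range_sup {F : Submodule ℤ_[p] A}
    (hF : IsDivisibleSubmodule p F) {y : ℕ → A}
    (hy : ∀ i, (p : ℤ_[p]) • y (i + 1) - y i ∈ F) :
    IsDivisibleSubmodule p (Submodule.span ℤ_[p] (Set.range y) ⊔ F) := by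
  set P := Submodule.span ℤ_[p] (Set.range y) ⊔ F
  have hyP : ∀ i, y i ∈ P := fun i => Submodule.mem_sup_left (Submodule.subset_span ⟨i, rfl⟩)
  have hFP : F ≤ P := le_sup_right
  rw [isDivisibleSubmodule_iff_le_map_smul] at hF ⊢
  refine sup_le ?_ (hF.trans (Submodule.map_mono hFP))
  rw [Submodule.span_le]
  rintro _ ⟨i, rfl⟩
  obtain ⟨w, hw, hpw⟩ := hF (hy i)
  refine ⟨y (i + 1) - w, P.sub_mem (hyP (i + 1)) (hFP hw), ?_⟩
  simp only [LinearMap.smul_apply, LinearMap.id_apply] at hpw ⊢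
  rw [smul_sub, hpw, sub_sub_cancel]

theorem IsDivisibleSubmodule.le_divPart {D : Submodule ℤ_[p] A}
    (hD : IsDivisibleSubmodule p D) : D ≤ divPart p A :=
  le_sSup hD

theorem IsDivisibleSubmodule.mem_divPart_of_le {P W : Submodule ℤ_[p] A}
    (hP : IsDivisibleSubmodule p P) (hPW : P ≤ W) {x : W} (hx : (x : A) ∈ P) :
    x ∈ divPart p W := by
  refine IsDivisibleSubmodule.le_divPart (D := P.comap W.subtype) ?_ hx
  rintro ⟨z, hzW⟩ hz
  obtain ⟨y, hy, rfl⟩ := hP z hz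
  exact ⟨⟨y, hPW hy⟩, hy, rfl⟩

theorem smul_mem_divPart_of_nsmul_cotor_eq_zero {n : ℕ} (hn : ∀ x : Cotor p A, n • x = 0)
    (x : A) : (n : ℤ_[p]) • x ∈ divPart p A := by
  rw [← Submodule.Quotient.mk_eq_zero, Submodule.Quotient.mk_smul, Nat.cast_smul_eq_nsmul]
  exact hn _

theorem exists_isDivisibleSubmodule_le_comap (g : A →ₗ[ℤ_[p]] B) (hg : Function.Surjective g)
    {F : Submodule ℤ_[p] A} (hF : IsDivisibleSubmodule p F) (hFg : F ≤ LinearMap.ker g)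
    {a : ℤ_[p]} (ha : a ≠ 0) (hker : ∀ x ∈ LinearMap.ker g, a • x ∈ F)
    {D : Submodule ℤ_[p] B} (hD : IsDivisibleSubmodule p D) {d : B} (hd : d ∈ D) :
    ∃ P : Submodule ℤ_[p] A, IsDivisibleSubmodule p P ∧ P ≤ D.comap g ∧ ∃ x ∈ P, g x = d := by
  obtain ⟨e₀, he₀, rfl⟩ := hD.exists_smul_eq ha hd
  obtain ⟨e, rfl, he, hpe⟩ := hD.exists_seq he₀
  choose m hm using fun i => hg (e i)
  have hdefect : ∀ i, (p : ℤ_[p]) • (a • m (i + 1)) - a • m i ∈ F := by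
    intro i
    rw [smul_comm, ← smul_sub]
    refine hker _ ?_
    rw [LinearMap.mem_ker, map_sub, map_smul, hm, hm, hpe, sub_self]
  refine ⟨_, isDivisibleSubmodule_span_range_sup (y := fun i => a • m i) hF hdefect, sup_le ?_ ?_, a • m 0,
    Submodule.mem_sup_left (Submodule.subset_span ⟨0, rfl⟩), by rw [map_smul, hm]⟩
  · rw [Submodule.span_le]
    rintro _ ⟨i, rfl⟩
    simpa only [SetLike.mem_coe, Submodule.mem_comap, map_smul, hm] using D.smul_mem a (he i)
  · exact hFg.trans (LinearMap.ker_le_comap g)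

end Divisible

theorem stmt3_general {p : ℕ} [Fact p.Prime]
    {L M N : Type*} [AddCommGroup L] [Module ℤ_[p] L] [AddCommGroup M] [Module ℤ_[p] M]
    [AddCommGroup N] [Module ℤ_[p] N]
    (f : L →ₗ[ℤ_[p]] M) (g : M →ₗ[ℤ_[p]] N)
    (hg : Function.Surjective g)
    (hfg : LinearMap.range f = LinearMap.ker g)
    (hLcot : ∃ n : ℕ, 0 < n ∧ ∀ x : Cotor p L, n • x = 0) :
    (∀ D : Submodule ℤ_[p] N, IsDivisibleSubmodule p D →
      ∀ d ∈ D, ∃ x : Submodule.comap g D,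
        x ∈ divPart p (Submodule.comap g D) ∧ g (x : M) = d) ∧
    (∀ y ∈ divPart p N, ∃ x ∈ divPart p M, g x = y) := by
  obtain ⟨n, hn, hkill⟩ := hLcot
  have hFg : (divPart p L).map f ≤ LinearMap.ker g := hfg ▸ LinearMap.map_le_range
  have hker : ∀ x ∈ LinearMap.ker g, (n : ℤ_[p]) • x ∈ (divPart p L).map f := by
    rw [← hfg]
    rintro _ ⟨l, rfl⟩
    exact ⟨_, smul_mem_divPart_of_nsmul_cotor_eq_zero hkill l, map_smul f _ l⟩
  have lift := fun {D : Submodule ℤ_[p] N} (hD : IsDivisibleSubmodule p D) {d} (hd : d ∈ D) =>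
    exists_isDivisibleSubmodule_le_comap g hg (isDivisibleSubmodule_divPart.map f) hFg
      (Nat.cast_ne_zero.mpr hn.ne') hker hD hd
  refine ⟨fun D hD d hd => ?_, fun y hy => ?_⟩
  · obtain ⟨P, hP, hPD, x, hxP, rfl⟩ := lift hD hd
    exact ⟨⟨x, hPD hxP⟩, hP.mem_divPart_of_le hPD hxP, rfl⟩
  · obtain ⟨P, hP, -, x, hxP, rfl⟩ := lift isDivisibleSubmodule_divPart hy
    exact ⟨x, hP.le_divPart hxP, rfl⟩

/-- Lemma 1.3 (3): let `0 → L → M → N → 0` be a short exact sequence of `ℤ_p`-modules such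
that `L_Div` is cofinitely generated and `Cotor(L)` has finite exponent.  Then for any
divisible subgroup `D ⊆ N` with preimage `D' ⊆ M`, the induced map `(D')_Div → D` is
surjective.  In particular `M_Div → N_Div` is surjective. -/
theorem stmt3 {p : ℕ} [Fact p.Prime]
    {L M N : Type*} [AddCommGroup L] [Module ℤ_[p] L] [AddCommGroup M] [Module ℤ_[p] M]
    [AddCommGroup N] [Module ℤ_[p] N]
    (f : L →ₗ[ℤ_[p]] M) (g : M →ₗ[ℤ_[p]] N)
    (hf : Function.Injective f) (hg : Function.Surjective g)
    (hfg : LinearMap.range f = LinearMap.ker g)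
    (hLdiv : CofinGen p (divPart p L))
    (hLcot : ∃ n : ℕ, 0 < n ∧ ∀ x : Cotor p L, n • x = 0) :
    (∀ D : Submodule ℤ_[p] N, IsDivisibleSubmodule p D →
      ∀ d ∈ D, ∃ x : Submodule.comap g D,
        x ∈ divPart p (Submodule.comap g D) ∧ g (x : M) = d) ∧
    (∀ y ∈ divPart p N, ∃ x ∈ divPart p M, g x = y) :=
  stmt3_general f g hg hfg hLcot
end

section
/- Let M be a Z_p-module fitting in an exact sequence E → M → N → 0 of Z_p-modules where E has finite exponent, N is divisible and cofinitely generated, and M is divisible. Then M is cofinitely generated. -/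
/-! Apply `Hom(-, D)` with `D = ℚ_p/ℤ_p` to `E → M → N → 0`: by left exactness, `Hom(N, D)` is
the module of maps `M → D` vanishing on the image of `E`. If `p^e` kills `E`, then `p^e • f` is
such a map for every `f : M → D`; and since `M` is divisible, multiplication by `p^e` is
injective on `Hom(M, D)`. Thus `Hom(M, D)` embeds into the finitely generated
`ℤ_p`-module `Hom(N, D)`, and `ℤ_p` is Noetherian. -/

theorem Module.Finite.of_smul_injective_of_smul_mem_range {R X Y : Type*} [CommRing R]
    [IsNoetherianRing R] [AddCommGroup X] [Module R X] [AddCommGroup Y] [Module R Y]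
    [Module.Finite R Y] (φ : Y →ₗ[R] X) (r : R) (hr : Function.Injective (r • · : X → X))
    (hmem : ∀ x, r • x ∈ LinearMap.range φ) : Module.Finite R X :=
  have : IsNoetherian R (LinearMap.range φ) := isNoetherian_of_isNoetherianRing_of_finite R _
  Module.Finite.of_injective ((r • LinearMap.id).codRestrict _ hmem) fun _ _ h ↦
    hr (congrArg Subtype.val h)

theorem LinearMap.smul_injective_of_surjective_smul {R M D : Type*} [CommRing R]
    [AddCommGroup M] [Module R M] [AddCommGroup D] [Module R D] (r : R)
    (hr : Function.Surjective (r • · : M → M)) :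
    Function.Injective (r • · : (M →ₗ[R] D) → (M →ₗ[R] D)) := by
  intro f g hfg
  ext x
  obtain ⟨y, rfl⟩ := hr x
  simpa only [map_smul, LinearMap.smul_apply] using LinearMap.congr_fun hfg y

theorem Module.Finite.linearMap_of_exact {R E M N D : Type*} [CommRing R] [IsNoetherianRing R]
    [AddCommGroup E] [Module R E] [AddCommGroup M] [Module R M] [AddCommGroup N] [Module R N]
    [AddCommGroup D] [Module R D] [Module.Finite R (N →ₗ[R] D)]
    {u : E →ₗ[R] M} {v : M →ₗ[R] N} (hexact : Function.Exact u v) (hv : Function.Surjective v)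
    (r : R) (hE : ∀ x : E, r • x = 0) (hM : Function.Surjective (r • · : M → M)) :
    Module.Finite R (M →ₗ[R] D) := by
  refine of_smul_injective_of_smul_mem_range (v.lcomp R D) r
    (LinearMap.smul_injective_of_surjective_smul r hM) fun f ↦ ?_
  refine (LinearMap.exact_lcomp_of_exact_of_surjective D hexact hv _).mp ?_
  ext x
  simp only [LinearMap.lcomp_apply', LinearMap.comp_apply, LinearMap.smul_apply,
    LinearMap.zero_apply]
  rw [← map_smul, ← map_smul, hE, map_zero, map_zero]

theorem surjective_pow_smul_of_isDivisibleSubmodule_top {p : ℕ} [Fact p.Prime] {M : Type*}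
    [AddCommGroup M] [Module ℤ_[p] M] (hM : IsDivisibleSubmodule p (⊤ : Submodule ℤ_[p] M))
    (k : ℕ) : Function.Surjective ((p : ℤ_[p]) ^ k • · : M → M) := by
  rw [← smul_iterate]
  refine Function.Surjective.iterate (fun x ↦ ?_) k
  obtain ⟨y, -, hy⟩ := hM x trivial
  exact ⟨y, hy⟩

theorem stmt13_general {p : ℕ} [Fact p.Prime]
    {E M N : Type*} [AddCommGroup E] [Module ℤ_[p] E] [AddCommGroup M] [Module ℤ_[p] M]
    [AddCommGroup N] [Module ℤ_[p] N]
    (u : E →ₗ[ℤ_[p]] M) (v : M →ₗ[ℤ_[p]] N)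
    (hv : Function.Surjective v)
    (huv : LinearMap.range u = LinearMap.ker v)
    (hE : ∃ e : ℕ, ∀ x : E, (p : ℤ_[p]) ^ e • x = 0)
    (hNcofin : CofinGen p N)
    (hMdiv : IsDivisibleSubmodule p (⊤ : Submodule ℤ_[p] M)) :
    CofinGen p M := by
  obtain ⟨e, he⟩ := hE
  have : Module.Finite ℤ_[p] (N →ₗ[ℤ_[p]] QpModZp p) := hNcofin
  exact Module.Finite.linearMap_of_exact (LinearMap.exact_iff.mpr huv.symm) hv _ he
    (surjective_pow_smul_of_isDivisibleSubmodule_top hMdiv e)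

/-- Lemma 1.3 (2) in the form used for graded quotients: if `E → M → N → 0` is exact with
`E` of finite exponent, `N` divisible and cofinitely generated, and `M` divisible, then
`M` is cofinitely generated. -/
theorem stmt13 {p : ℕ} [Fact p.Prime]
    {E M N : Type*} [AddCommGroup E] [Module ℤ_[p] E] [AddCommGroup M] [Module ℤ_[p] M]
    [AddCommGroup N] [Module ℤ_[p] N]
    (u : E →ₗ[ℤ_[p]] M) (v : M →ₗ[ℤ_[p]] N)
    (hv : Function.Surjective v)
    (huv : LinearMap.range u = LinearMap.ker v)
    (hE : ∃ e : ℕ, ∀ x : E, (p : ℤ_[p]) ^ e • x = 0)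
    (hNdiv : IsDivisibleSubmodule p (⊤ : Submodule ℤ_[p] N))
    (hNcofin : CofinGen p N)
    (hMdiv : IsDivisibleSubmodule p (⊤ : Submodule ℤ_[p] M)) :
    CofinGen p M :=
  stmt13_general u v hv huv hE hNcofin hMdiv
end
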